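/- arXiv:2108.09255 — 3 statements merged into one kernel-verified Lean document; each statement's English description precedes it below -/
import Mathlib

section
/- Let θ > 1/2 and define q(x) = θx² − log cosh(2θx). Then the equation q'(x) = 0, i.e. 2θ[x − tanh(2θx)] = 0, has a unique positive root t on (0,∞), and t is the unique global minimizer of q on [0,∞). -/
open Real Set

private lemma tanh_hasDerivAt' (x : ℝ) : HasDerivAt Real.tanh (1 / Real.cosh x ^ 2) x := by
  have h := (Real.hasDerivAt_sinh x).div (Real.hasDerivAt_cosh x) (Real.cosh_pos x).ne'
  have heq : (Real.cosh x * Real.cosh x - Real.sinh x * Real.sinh x) / Real.cosh x ^ 2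
      = 1 / Real.cosh x ^ 2 := by
    rw [show Real.cosh x * Real.cosh x - Real.sinh x * Real.sinh x
        = Real.cosh x ^ 2 - Real.sinh x ^ 2 by ring, Real.cosh_sq_sub_sinh_sq]
  rw [heq] at h
  have : (fun y => Real.sinh y / Real.cosh y) = Real.tanh := by
    funext y; rw [Real.tanh_eq_sinh_div_cosh]
  have h' : HasDerivAt (fun y => Real.sinh y / Real.cosh y) (1 / Real.cosh x ^ 2) x := h
  rwa [this] at h'

private lemma tanh_lt_one' (x : ℝ) : Real.tanh x < 1 := by
  rw [Real.tanh_eq_sinh_div_cosh, div_lt_one (Real.cosh_pos x)]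
  exact Real.sinh_lt_cosh x

/-- For θ > 1/2 and q(x) = θx² − log cosh(2θx), the equation q'(x) = 2θ[x − tanh(2θx)] = 0
has a unique positive root t on (0,∞), and t is the unique global minimizer of q on [0,∞). -/
theorem stmt_0 (θ : ℝ) (hθ : 1 / 2 < θ) :
    ∃ t : ℝ, 0 < t ∧ 2 * θ * (t - Real.tanh (2 * θ * t)) = 0 ∧
      (∀ x : ℝ, 0 < x → 2 * θ * (x - Real.tanh (2 * θ * x)) = 0 → x = t) ∧
      (∀ x : ℝ, 0 ≤ x → x ≠ t →
        θ * t ^ 2 - Real.log (Real.cosh (2 * θ * t)) <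
          θ * x ^ 2 - Real.log (Real.cosh (2 * θ * x))) := by
  have hθ0 : 0 < θ := by linarith
  set f : ℝ → ℝ := fun x => x - Real.tanh (2 * θ * x) with hf_def
  set q : ℝ → ℝ := fun x => θ * x ^ 2 - Real.log (Real.cosh (2 * θ * x)) with hq_def
  -- derivatives
  have hu : ∀ x : ℝ, HasDerivAt (fun y : ℝ => 2 * θ * y) (2 * θ) x := by
    intro x; simpa using (hasDerivAt_id x).const_mul (2 * θ)
  have hfd : ∀ x : ℝ, HasDerivAt f (1 - 2 * θ / Real.cosh (2 * θ * x) ^ 2) x := by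
    intro x
    have h2 := (tanh_hasDerivAt' (2 * θ * x)).comp x (hu x)
    have h3 := (hasDerivAt_id x).sub h2
    refine h3.congr_deriv ?_
    ring
  have hqd : ∀ x : ℝ, HasDerivAt q (2 * θ * f x) x := by
    intro x
    have h1 : HasDerivAt (fun y : ℝ => θ * y ^ 2) (θ * (2 * x)) x := by
      simpa using (hasDerivAt_pow 2 x).const_mul θ
    have h2 : HasDerivAt (fun y => Real.cosh (2 * θ * y)) (Real.sinh (2 * θ * x) * (2 * θ)) x :=
      (Real.hasDerivAt_cosh _).comp x (hu x)
    have h3 := h2.log (Real.cosh_pos _).ne'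
    have h4 := h1.sub h3
    refine h4.congr_deriv ?_
    simp only [hf_def, Real.tanh_eq_sinh_div_cosh]
    field_simp [(Real.cosh_pos (2 * θ * x)).ne']
  have hfc : Continuous f := continuous_iff_continuousAt.2 fun x => (hfd x).continuousAt
  have hqc : Continuous q := continuous_iff_continuousAt.2 fun x => (hqd x).continuousAt
  have hderiv : ∀ x : ℝ, deriv f x = 1 - 2 * θ / Real.cosh (2 * θ * x) ^ 2 := fun x =>
    (hfd x).deriv
  have hqderiv : ∀ x : ℝ, deriv q x = 2 * θ * f x := fun x => (hqd x).deriv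
  -- f strictly convex on [0,∞)
  have hmono : StrictMonoOn (deriv f) (interior (Ici (0:ℝ))) := by
    rw [interior_Ici]
    intro a ha b hb hab
    rw [mem_Ioi] at ha hb
    rw [hderiv a, hderiv b]
    have h1 : Real.cosh (2 * θ * a) < Real.cosh (2 * θ * b) := by
      rw [Real.cosh_lt_cosh, abs_of_pos (by positivity), abs_of_pos (by positivity)]
      nlinarith
    have h2 : (0:ℝ) < Real.cosh (2 * θ * a) := Real.cosh_pos _
    have : 2 * θ / Real.cosh (2 * θ * b) ^ 2 < 2 * θ / Real.cosh (2 * θ * a) ^ 2 := by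
      apply div_lt_div_of_pos_left (by linarith) (by positivity) (by nlinarith)
    linarith
  have hconv : StrictConvexOn ℝ (Ici (0:ℝ)) f :=
    StrictMonoOn.strictConvexOn_of_deriv (convex_Ici 0) hfc.continuousOn hmono
  have hf0 : f 0 = 0 := by simp [hf_def]
  -- f is negative just to the right of 0
  have hd0 : deriv f 0 < 0 := by
    rw [hderiv 0]
    simp [Real.cosh_zero]
    linarith
  have hcd : Continuous (deriv f) := by
    have : Continuous (fun x : ℝ => 1 - 2 * θ / Real.cosh (2 * θ * x) ^ 2) := by
      apply continuous_const.sub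
      exact continuous_const.div
        ((Real.continuous_cosh.comp (continuous_const.mul continuous_id)).pow 2)
        (fun x => by positivity)
    have he : deriv f = fun x : ℝ => 1 - 2 * θ / Real.cosh (2 * θ * x) ^ 2 := funext hderiv
    rwa [he]
  have hev : ∀ᶠ x in nhds (0:ℝ), deriv f x < 0 :=
    hcd.continuousAt.eventually_lt continuousAt_const hd0
  obtain ⟨ε, hε, hball⟩ := Metric.eventually_nhds_iff.1 hev
  set d : ℝ := min (ε / 2) 1 with hd_def
  have hd0' : 0 < d := by positivity
  have hd1 : d ≤ 1 := min_le_right _ _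
  have hdneg : ∀ x ∈ Ioo (0:ℝ) d, deriv f x < 0 := by
    intro x hx
    apply hball
    rw [Real.dist_eq, sub_zero, abs_of_pos hx.1]
    have := hx.2
    have : x < ε / 2 := lt_of_lt_of_le this (min_le_left _ _)
    linarith
  have hanti : StrictAntiOn f (Icc 0 d) := by
    apply strictAntiOn_of_deriv_neg (convex_Icc 0 d) hfc.continuousOn
    rw [interior_Icc]; exact hdneg
  have hfdlt : f d < 0 := by
    have := hanti (left_mem_Icc.2 hd0'.le) (right_mem_Icc.2 hd0'.le) hd0'
    rwa [hf0] at this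
  have hf2 : 0 < f 2 := by
    have := tanh_lt_one' (2 * θ * 2)
    simp only [hf_def]
    linarith
  -- IVT
  have hd2 : d ≤ 2 := by linarith
  have hmem : (0:ℝ) ∈ Icc (f d) (f 2) := ⟨hfdlt.le, hf2.le⟩
  obtain ⟨t, htm, hft⟩ := intermediate_value_Icc hd2 (hfc.continuousOn) hmem
  have htpos : 0 < t := lt_of_lt_of_le hd0' htm.1
  -- sign of f on either side of t via strict convexity
  have hneg : ∀ x : ℝ, 0 < x → x < t → f x < 0 := by
    intro x hx hxt
    have ha : (0:ℝ) < 1 - x / t := by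
      rw [sub_pos, div_lt_one htpos]; exact hxt
    have hb : (0:ℝ) < x / t := by positivity
    have h := hconv.2 (le_refl (0:ℝ) : (0:ℝ) ∈ Ici (0:ℝ)) (htpos.le : t ∈ Ici (0:ℝ))
      htpos.ne ha hb (by ring)
    have hx' : (1 - x / t) • (0:ℝ) + (x / t) • t = x := by
      simp only [smul_eq_mul, mul_zero, zero_add]
      field_simp
    rw [hx', hf0, hft] at h
    simpa using h
  have hpos : ∀ x : ℝ, t < x → 0 < f x := by
    intro x hxt
    have hx : 0 < x := htpos.trans hxt
    have ha : (0:ℝ) < 1 - t / x := by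
      rw [sub_pos, div_lt_one hx]; exact hxt
    have hb : (0:ℝ) < t / x := by positivity
    have h := hconv.2 (le_refl (0:ℝ) : (0:ℝ) ∈ Ici (0:ℝ)) (hx.le : x ∈ Ici (0:ℝ))
      hx.ne ha hb (by ring)
    have ht' : (1 - t / x) • (0:ℝ) + (t / x) • x = t := by
      simp only [smul_eq_mul, mul_zero, zero_add]
      field_simp
    rw [ht', hf0, hft] at h
    simp only [smul_eq_mul, mul_zero, zero_add] at h
    rcases mul_pos_iff.1 h with ⟨_, h2⟩ | ⟨h1, _⟩
    · exact h2
    · linarith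
  refine ⟨t, htpos, ?_, ?_, ?_⟩
  · show 2 * θ * f t = 0
    rw [hft, mul_zero]
  · intro x hx hfx
    have hfx0 : f x = 0 := by
      have h2θ : (2 * θ) ≠ 0 := by positivity
      exact (mul_eq_zero.1 hfx).resolve_left h2θ
    rcases lt_trichotomy x t with h | h | h
    · exact absurd hfx0 (hneg x hx h).ne
    · exact h
    · exact absurd hfx0.symm (hpos x h).ne
  · -- global strict minimality
    have hqanti : StrictAntiOn q (Icc 0 t) := by
      apply strictAntiOn_of_deriv_neg (convex_Icc 0 t) hqc.continuousOn
      rw [interior_Icc]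
      intro x hx
      rw [hqderiv x]
      exact mul_neg_of_pos_of_neg (by positivity) (hneg x hx.1 hx.2)
    have hqmono : StrictMonoOn q (Ici t) := by
      apply strictMonoOn_of_deriv_pos (convex_Ici t) hqc.continuousOn
      rw [interior_Ici]
      intro x hx
      rw [hqderiv x]
      exact mul_pos (by positivity) (hpos x hx)
    intro x hx0 hxt
    rcases hxt.lt_or_gt with h | h
    · exact hqanti ⟨hx0, h.le⟩ ⟨htpos.le, le_refl t⟩ h
    · exact hqmono (self_mem_Ici) (h.le) h
end

section
/- Let θ > 1/2 and let t > 0 be the unique positive root of x = tanh(2θx). Then 8θ³·sech⁶(2θt) < 1. -/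
/-!
Put `u = 2θt`. The fixed-point equation reads `sinh u = t cosh u`, and `u < sinh u` since `u > 0`;
dividing by `t` gives `2θ < cosh u ≤ cosh² u`. So `2θ sech² u < 1`, and `8θ³ sech⁶ u` is its cube.
-/

open Real

lemma Real.sinh_eq_mul_cosh_of_tanh_eq {x t : ℝ} (h : tanh x = t) : sinh x = t * cosh x := by
  rw [← h, tanh_eq_sinh_div_cosh, div_mul_cancel₀ _ (cosh_pos x).ne']

lemma Real.lt_cosh_of_tanh_mul_eq {a t : ℝ} (ht : 0 < t) (h : tanh (a * t) = t) :
    a < cosh (a * t) := by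
  rcases le_or_gt a 0 with ha | ha
  · linarith [one_le_cosh (a * t)]
  · have hlt : a * t < sinh (a * t) := self_lt_sinh_iff.mpr (mul_pos ha ht)
    rw [sinh_eq_mul_cosh_of_tanh_eq h, mul_comm t] at hlt
    exact lt_of_mul_lt_mul_right hlt ht.le

lemma Real.mul_one_div_cosh_sq_lt_one {a t : ℝ} (ht : 0 < t) (h : tanh (a * t) = t) :
    a * (1 / cosh (a * t)) ^ 2 < 1 := by
  have hc : 1 ≤ cosh (a * t) := one_le_cosh (a * t)
  rw [div_pow, one_pow, mul_one_div, div_lt_one (by positivity)]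
  calc a < cosh (a * t) := lt_cosh_of_tanh_mul_eq ht h
    _ ≤ cosh (a * t) ^ 2 := by nlinarith

theorem stmt_13_general (θ t : ℝ) (ht : 0 < t)
    (hfix : Real.tanh (2 * θ * t) = t) :
    8 * θ ^ 3 * (1 / Real.cosh (2 * θ * t)) ^ 6 < 1 := by
  have hsq : 2 * θ * (1 / cosh (2 * θ * t)) ^ 2 < 1 := mul_one_div_cosh_sq_lt_one ht hfix
  calc 8 * θ ^ 3 * (1 / cosh (2 * θ * t)) ^ 6 = (2 * θ * (1 / cosh (2 * θ * t)) ^ 2) ^ 3 := by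
        ring
    _ < 1 ^ 3 := (Odd.pow_lt_pow (by decide)).mpr hsq
    _ = 1 := one_pow 3

/-- For θ > 1/2 and t the unique positive root of x = tanh(2θx), one has
8θ³ sech⁶(2θt) < 1. -/
theorem stmt_13 (θ t : ℝ) (hθ : 1 / 2 < θ) (ht : 0 < t)
    (hfix : Real.tanh (2 * θ * t) = t) :
    8 * θ ^ 3 * (1 / Real.cosh (2 * θ * t)) ^ 6 < 1 :=
  stmt_13_general θ t ht hfix
end

section
/- Gaussian conjugation identity: for each i, if conditionally on a {−1,1}-valued symmetric array Y (with zero diagonal) the random variables φ₁,…,φₙ are independent with φᵢ ~ N(kᵢ/(n−1), 1/(θ(n−1))) where kᵢ = ∑ⱼ Y_{ij}, and Y has probability mass proportional to exp(θ/(2(n−1)) ∑ᵢ kᵢ² + (1/2)∑ᵢ βᵢkᵢ), then conditionally on φ the edges (Y_{ij})_{i<j} are mutually independent with P(Y_{ij} = 1 | φ) = exp(θ(φᵢ+φⱼ) + (βᵢ+βⱼ)/2) / (exp(θ(φᵢ+φⱼ) + (βᵢ+βⱼ)/2) + exp(−θ(φᵢ+φⱼ) − (βᵢ+βⱼ)/2)).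 -/
open Finset

/-- The edge set: pairs i < j of vertices in [n]. -/
abbrev Edge (n : ℕ) := {p : Fin n × Fin n // p.1 < p.2}

/-- Sign encoding of a Boolean edge value: true ↦ +1, false ↦ −1. -/
def sgn (b : Bool) : ℝ := if b then 1 else -1

/-- The joint weight of (Y, φ), proportional to the joint density of the auxiliary-variable
representation: exp(−(n−1)θ/2 ∑φᵢ² + ∑_{i<j} Y_{ij}(θ(φᵢ+φⱼ) + (βᵢ+βⱼ)/2)). -/
noncomputable def jointWeight (n : ℕ) (θ : ℝ) (β φ : Fin n → ℝ)
    (Y : Edge n → Bool) : ℝ :=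
  Real.exp (-((n : ℝ) - 1) * θ / 2 * ∑ i, φ i ^ 2 +
    ∑ e : Edge n, sgn (Y e) * (θ * (φ e.1.1 + φ e.1.2) + (β e.1.1 + β e.1.2) / 2))


/-! Conditionally on φ, the joint weight is a constant times a product over the edges of
`exp (sgn (Y e) * a e)`, where `a e = θ (φᵢ + φⱼ) + (βᵢ + βⱼ)/2` is the edge logit. Weights of
product form make the coordinates independent: normalizing a product over all configurations is
normalizing each factor, and the normalized factor `e^{± a} / (e^a + e^{-a})` is the stated
Bernoulli law. -/

theorem prod_div_sum_prod {ι κ K : Type*} [Fintype ι] [DecidableEq ι] [Fintype κ] [Field K]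
    (w : ι → κ → K) (x : ι → κ) :
    (∏ i, w i (x i)) / ∑ x' : ι → κ, ∏ i, w i (x' i) = ∏ i, w i (x i) / ∑ k, w i k := by
  rw [← Fintype.prod_sum, ← prod_div_distrib]

theorem sum_bool_exp_sgn_mul (a : ℝ) :
    ∑ b : Bool, Real.exp (sgn b * a) = Real.exp a + Real.exp (-a) := by
  simp [sgn]

theorem exp_sgn_mul_div (b : Bool) (a : ℝ) :
    Real.exp (sgn b * a) / (Real.exp a + Real.exp (-a)) =
      if b then Real.exp a / (Real.exp a + Real.exp (-a))
      else 1 - Real.exp a / (Real.exp a + Real.exp (-a)) := by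
  cases b
  · have hpos : 0 < Real.exp a + Real.exp (-a) := by positivity
    simp only [sgn, Bool.false_eq_true, if_false, neg_one_mul]
    field_simp
    ring
  · simp [sgn]

noncomputable def edgeLogit {n : ℕ} (θ : ℝ) (β φ : Fin n → ℝ) (e : Edge n) : ℝ :=
  θ * (φ e.1.1 + φ e.1.2) + (β e.1.1 + β e.1.2) / 2

theorem jointWeight_eq_mul_prod (n : ℕ) (θ : ℝ) (β φ : Fin n → ℝ) (Y : Edge n → Bool) :
    jointWeight n θ β φ Y = Real.exp (-((n : ℝ) - 1) * θ / 2 * ∑ i, φ i ^ 2) *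
      ∏ e, Real.exp (sgn (Y e) * edgeLogit θ β φ e) := by
  rw [jointWeight, Real.exp_add, Real.exp_sum]
  rfl

theorem stmt_17_general (n : ℕ) (θ : ℝ) (β φ : Fin n → ℝ) (Y : Edge n → Bool) :
    jointWeight n θ β φ Y / (∑ Y' : Edge n → Bool, jointWeight n θ β φ Y') =
      ∏ e : Edge n,
        (if Y e then
          Real.exp (θ * (φ e.1.1 + φ e.1.2) + (β e.1.1 + β e.1.2) / 2) /
            (Real.exp (θ * (φ e.1.1 + φ e.1.2) + (β e.1.1 + β e.1.2) / 2) +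
              Real.exp (-(θ * (φ e.1.1 + φ e.1.2)) - (β e.1.1 + β e.1.2) / 2))
        else
          1 - Real.exp (θ * (φ e.1.1 + φ e.1.2) + (β e.1.1 + β e.1.2) / 2) /
            (Real.exp (θ * (φ e.1.1 + φ e.1.2) + (β e.1.1 + β e.1.2) / 2) +
              Real.exp (-(θ * (φ e.1.1 + φ e.1.2)) - (β e.1.1 + β e.1.2) / 2))) := by
  simp_rw [jointWeight_eq_mul_prod, ← mul_sum]
  rw [mul_div_mul_left _ _ (Real.exp_ne_zero _),
    prod_div_sum_prod (fun e b => Real.exp (sgn b * edgeLogit θ β φ e))]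
  refine prod_congr rfl fun e _ => ?_
  rw [sum_bool_exp_sgn_mul, exp_sgn_mul_div, edgeLogit, neg_add']

/-- Given φ, the edges are conditionally independent with the stated Bernoulli law:
the conditional pmf of Y given φ factorizes as a product over edges, with
P(Y_{ij} = 1 | φ) = e^{θ(φᵢ+φⱼ)+(βᵢ+βⱼ)/2} / (e^{θ(φᵢ+φⱼ)+(βᵢ+βⱼ)/2} + e^{−θ(φᵢ+φⱼ)−(βᵢ+βⱼ)/2}). -/
theorem stmt_17 (n : ℕ) (θ : ℝ) (hθ : 0 < θ) (β φ : Fin n → ℝ) (Y : Edge n → Bool) :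
    jointWeight n θ β φ Y / (∑ Y' : Edge n → Bool, jointWeight n θ β φ Y') =
      ∏ e : Edge n,
        (if Y e then
          Real.exp (θ * (φ e.1.1 + φ e.1.2) + (β e.1.1 + β e.1.2) / 2) /
            (Real.exp (θ * (φ e.1.1 + φ e.1.2) + (β e.1.1 + β e.1.2) / 2) +
              Real.exp (-(θ * (φ e.1.1 + φ e.1.2)) - (β e.1.1 + β e.1.2) / 2))
        else
          1 - Real.exp (θ * (φ e.1.1 + φ e.1.2) + (β e.1.1 + β e.1.2) / 2) /
            (Real.exp (θ * (φ e.1.1 + φ e.1.2) + (β e.1.1 + β e.1.2) / 2) +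
              Real.exp (-(θ * (φ e.1.1 + φ e.1.2)) - (β e.1.1 + β e.1.2) / 2))) :=
  stmt_17_general n θ β φ Y
end
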